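/- arXiv:1606.01261 — 5 statements merged into one kernel-verified Lean document; each statement's English description precedes it below -/
import Mathlib

section
/- Let X be a real normed vector space with continuous dual X*, let ξ1, ξ2 ∈ X*, let f : X → ℝ ∪ {+∞}, and let C > 0, κ > 0. Suppose x1, x2 ∈ X satisfy f(x1), f(x2) ∈ ℝ and, for i = 1, 2, f(x) ≥ f(x_i) + ⟨x − x_i, ξ_i⟩ + C·‖x − x_i‖^{1+κ} for all x ∈ X. Then ‖x1 − x2‖ ≤ (2C)^{−1/κ} · ‖ξ1 − ξ2‖_*^{1/κ}. In particular, with C = K/2 and κ = 1 (classical K-strong convexity), the map ξ ↦ x_ξ (the Fréchet gradient of the conjugate f*) is (1/K)-Lipschitz with respect to the dual norm. -/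
/-! Testing the support inequality at `x1` against the point `x2` and vice versa, and adding,
the values of `f` cancel and leave `2 C ‖x1 - x2‖^{1+κ} ≤ (ξ1 - ξ2)(x1 - x2) ≤ ‖ξ1 - ξ2‖ ‖x1 - x2‖`;
dividing by `‖x1 - x2‖` and taking `κ`-th roots gives the bound. -/

open Real

theorem le_rpow_neg_mul_rpow_of_mul_rpow_one_add_le {c κ d L : ℝ} (hc : 0 < c) (hκ : 0 < κ)
    (hd : 0 ≤ d) (hL : 0 ≤ L) (h : c * d ^ (1 + κ) ≤ L * d) :
    d ≤ c ^ (-(1 / κ)) * L ^ (1 / κ) := by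
  rcases hd.eq_or_lt with rfl | hd
  · positivity
  have hdκ : d ^ κ ≤ L / c := by
    rw [le_div_iff₀ hc, mul_comm]
    rw [rpow_add hd, rpow_one, mul_left_comm, mul_comm L] at h
    exact le_of_mul_le_mul_left h hd
  calc d = (d ^ κ) ^ (1 / κ) := by rw [← rpow_mul hd.le, mul_one_div_cancel hκ.ne', rpow_one]
    _ ≤ (L / c) ^ (1 / κ) := by gcongr
    _ = c ^ (-(1 / κ)) * L ^ (1 / κ) := by
      rw [div_rpow hL hc.le, rpow_neg hc.le, div_eq_inv_mul]

theorem two_mul_le_sub_apply_of_support {X : Type*} [SeminormedAddCommGroup X] [Module ℝ X]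
    {f : X → EReal} {γ : ℝ → ℝ} {ξ1 ξ2 : X →L[ℝ] ℝ} {x1 x2 : X}
    {a1 a2 : ℝ} (hf1 : f x1 = a1) (hf2 : f x2 = a2)
    (h1 : ∀ x : X, ((a1 + ξ1 (x - x1) + γ ‖x - x1‖ : ℝ) : EReal) ≤ f x)
    (h2 : ∀ x : X, ((a2 + ξ2 (x - x2) + γ ‖x - x2‖ : ℝ) : EReal) ≤ f x) :
    2 * γ ‖x1 - x2‖ ≤ (ξ1 - ξ2) (x1 - x2) := by
  have at_x2 : a1 + ξ1 (x2 - x1) + γ ‖x2 - x1‖ ≤ a2 := by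
    simpa only [hf2, EReal.coe_le_coe_iff] using h1 x2
  have at_x1 : a2 + ξ2 (x1 - x2) + γ ‖x1 - x2‖ ≤ a1 := by
    simpa only [hf1, EReal.coe_le_coe_iff] using h2 x1
  rw [← neg_sub x1 x2, map_neg, norm_neg] at at_x2
  rw [sub_apply]
  linarith

/-- **Hölder continuity of the gradient of the conjugate for power-type strong convexity.**
If `f : X → ℝ ∪ {+∞}` satisfies the uniform essential strong convexity inequality at
`x1, x2` with supporting functionals `ξ1, ξ2` and modulus `γ(r) = C r^{1+κ}` (`C, κ > 0`),
then `‖x1 - x2‖ ≤ (2C)^{-1/κ} ‖ξ1 - ξ2‖⋆^{1/κ}`. (With `C = K/2`, `κ = 1`, this is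
`1/K`-Lipschitz continuity of the gradient `Df*` of the conjugate.) -/
theorem stmt1 {X : Type*} [NormedAddCommGroup X] [NormedSpace ℝ X]
    (f : X → EReal) (C κ : ℝ) (hC : 0 < C) (hκ : 0 < κ)
    (ξ1 ξ2 : X →L[ℝ] ℝ) (x1 x2 : X) (a1 a2 : ℝ)
    (hf1 : f x1 = (a1 : EReal)) (hf2 : f x2 = (a2 : EReal))
    (h1 : ∀ x : X, ((a1 + ξ1 (x - x1) + C * ‖x - x1‖ ^ (1 + κ) : ℝ) : EReal) ≤ f x)
    (h2 : ∀ x : X, ((a2 + ξ2 (x - x2) + C * ‖x - x2‖ ^ (1 + κ) : ℝ) : EReal) ≤ f x) :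
    ‖x1 - x2‖ ≤ (2 * C) ^ (-(1 / κ)) * ‖ξ1 - ξ2‖ ^ (1 / κ) := by
  have h := two_mul_le_sub_apply_of_support (γ := fun r => C * r ^ (1 + κ)) hf1 hf2 h1 h2
  refine le_rpow_neg_mul_rpow_of_mul_rpow_one_add_le (by positivity) hκ (norm_nonneg _)
    (norm_nonneg _) ?_
  calc 2 * C * ‖x1 - x2‖ ^ (1 + κ) ≤ (ξ1 - ξ2) (x1 - x2) := by rw [mul_assoc]; exact h
    _ ≤ ‖ξ1 - ξ2‖ * ‖x1 - x2‖ := (le_abs_self _).trans ((ξ1 - ξ2).le_opNorm _)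
end

section
/- (Dual Averaging regret bound.) In the Dual Averaging setting: let h be a regularizer on 𝒳 that is uniformly essentially strongly convex with modulus γ, where γ̃(r) := γ(r)/r (r > 0) is a strictly increasing bijection of (0,∞) onto (0,∞) with inverse γ̃⁻¹ extended by γ̃⁻¹(0) = 0. Let (η_t)_{t≥1} be a positive nonincreasing sequence with η_0 := η_1, let (u_t)_{t≥1} be any sequence in X*, and let (x_t)_{t≥1} be the Dual Averaging iterates. Then for every t ≥ 1 and every x ∈ 𝒳: Σ_{τ=1}^t ⟨u_τ, x⟩ − Σ_{τ=1}^t ⟨u_τ, x_τ⟩ ≤ (h(x) − h̲)/η_t + Σ_{τ=1}^t ‖u_τ‖_* · γ̃⁻¹( (η_{τ−1}/2)·‖u_τ‖_* ). -/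
open Finset

/-!
The potential `Φ(η, U) = (h*(η U) - h*(0)) / η` of the cumulative reward `U` controls the regret:
by Fenchel–Young the comparator earns at most `(h x - h̲) / η_t + Φ(η_t, U_t)`, and `Φ(η, 0) = 0`.
Each round raises `Φ` by at most `⟨x_t, u_t⟩ + ‖u_t‖ γ̃⁻¹(η_{t-1} ‖u_t‖ / 2)`. Lowering the
learning rate cannot raise `Φ`, because `a ↦ (h*(a U) + h̲) / a` is nondecreasing. And `h*` is
smooth: adding the strong convexity inequalities at `x_ξ` and `x_{ξ+v}` gives
`2 γ(d) ≤ ‖v‖ d` for `d = ‖x_{ξ+v} - x_ξ‖`, so `d ≤ γ̃⁻¹(‖v‖ / 2)` and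
`h*(ξ + v) ≤ h*(ξ) + ⟨x_ξ, v⟩ + ‖v‖ γ̃⁻¹(‖v‖ / 2)`.
-/

namespace DualAveraging

variable {X : Type*} [NormedAddCommGroup X] [NormedSpace ℝ X]

/-- `g ξ` is the point `x_ξ` of the definition. -/
structure IsUniformlyEssStronglyConvex (h : X → EReal) (γ : ℝ → ℝ)
    (g : (X →L[ℝ] ℝ) → X) : Prop where
  ne_bot : ∀ y, h y ≠ ⊥
  ne_top : ∀ ξ, h (g ξ) ≠ ⊤
  modulus_nonneg : ∀ r, 0 ≤ r → 0 ≤ γ r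
  le : ∀ ξ y, h (g ξ) + ((ξ (y - g ξ) + γ ‖y - g ξ‖ : ℝ) : EReal) ≤ h y

structure IsDivModulusInverse (γ γinv : ℝ → ℝ) : Prop where
  map_zero : γinv 0 = 0
  strictMonoOn : StrictMonoOn (fun r : ℝ => γ r / r) (Set.Ioi 0)
  exists_eq : ∀ s : ℝ, 0 < s → ∃ r : ℝ, 0 < r ∧ γ r / r = s
  inv_div : ∀ r : ℝ, 0 < r → γinv (γ r / r) = r

/-- The convex conjugate `h*(ξ)`, attained at `g ξ`. -/
noncomputable def conjugate (h : X → EReal) (g : (X →L[ℝ] ℝ) → X) (ξ : X →L[ℝ] ℝ) : ℝ :=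
  ξ (g ξ) - (h (g ξ)).toReal

/-- With `m = inf h = -h*(0)`, this is `Φ(η, U)`. -/
noncomputable def potential (h : X → EReal) (g : (X →L[ℝ] ℝ) → X) (m η : ℝ)
    (U : X →L[ℝ] ℝ) : ℝ :=
  (conjugate h g (η • U) + m) / η

theorem IsDivModulusInverse.le_of_le_mul {γ γinv : ℝ → ℝ} (hγ : IsDivModulusInverse γ γinv)
    {d σ : ℝ} (hσ : 0 < σ) (hγd : γ d ≤ σ * d) : d ≤ γinv σ := by
  obtain ⟨r, hr, rfl⟩ := hγ.exists_eq σ hσ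
  rw [hγ.inv_div r hr]
  by_contra! hrd
  have hlt : γ r / r < γ d / d := hγ.strictMonoOn hr (hr.trans hrd) hrd
  have hle : γ d / d ≤ γ r / r := (div_le_iff₀ (hr.trans hrd)).mpr hγd
  exact hlt.not_ge hle

namespace IsUniformlyEssStronglyConvex

variable {h : X → EReal} {γ γinv : ℝ → ℝ} {g : (X →L[ℝ] ℝ) → X} {m : ℝ}

theorem coe_toReal (hS : IsUniformlyEssStronglyConvex h γ g) (ξ : X →L[ℝ] ℝ) :
    (((h (g ξ)).toReal : ℝ) : EReal) = h (g ξ) :=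
  EReal.coe_toReal (hS.ne_top ξ) (hS.ne_bot _)

theorem toReal_add_le (hS : IsUniformlyEssStronglyConvex h γ g) (ξ : X →L[ℝ] ℝ) {y : X}
    {c : ℝ} (hy : h y = c) : (h (g ξ)).toReal + (ξ (y - g ξ) + γ ‖y - g ξ‖) ≤ c := by
  have := hS.le ξ y
  rwa [hy, ← hS.coe_toReal ξ, ← EReal.coe_add, EReal.coe_le_coe_iff] at this

theorem apply_le_add_conjugate (hS : IsUniformlyEssStronglyConvex h γ g) (ξ : X →L[ℝ] ℝ)
    {y : X} {c : ℝ} (hy : h y = c) : ξ y ≤ c + conjugate h g ξ := by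
  have hconv := hS.toReal_add_le ξ hy
  have := hS.modulus_nonneg _ (norm_nonneg (y - g ξ))
  rw [map_sub] at hconv
  unfold conjugate
  linarith

theorem apply_zero_eq_iInf (hS : IsUniformlyEssStronglyConvex h γ g) :
    h (g 0) = ⨅ y, h y := by
  refine le_antisymm (le_iInf fun y => le_trans ?_ (hS.le 0 y)) (iInf_le _ _)
  exact le_add_of_nonneg_right (by simpa using hS.modulus_nonneg _ (norm_nonneg (y - g 0)))

theorem le_toReal (hS : IsUniformlyEssStronglyConvex h γ g) (hm : ⨅ y, h y = m)
    (ξ : X →L[ℝ] ℝ) : m ≤ (h (g ξ)).toReal := by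
  rw [← EReal.coe_le_coe_iff, hS.coe_toReal, ← hm]
  exact iInf_le _ _

theorem conjugate_zero (hS : IsUniformlyEssStronglyConvex h γ g) (hm : ⨅ y, h y = m) :
    conjugate h g 0 = -m := by
  rw [conjugate, hS.apply_zero_eq_iInf, hm]
  simp

theorem two_mul_modulus_le (hS : IsUniformlyEssStronglyConvex h γ g) (ξ v : X →L[ℝ] ℝ) :
    2 * γ ‖g (ξ + v) - g ξ‖ ≤ ‖v‖ * ‖g (ξ + v) - g ξ‖ := by
  have e₁ := hS.toReal_add_le ξ (hS.coe_toReal (ξ + v)).symm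
  have e₂ := hS.toReal_add_le (ξ + v) (hS.coe_toReal ξ).symm
  have hv : v (g (ξ + v) - g ξ) ≤ ‖v‖ * ‖g (ξ + v) - g ξ‖ :=
    (Real.le_norm_self _).trans (v.le_opNorm _)
  rw [norm_sub_rev] at e₂
  simp only [map_sub, add_apply] at e₁ e₂ hv
  linarith

theorem norm_sub_le_inv (hS : IsUniformlyEssStronglyConvex h γ g)
    (hγ : IsDivModulusInverse γ γinv) (ξ v : X →L[ℝ] ℝ) :
    ‖g (ξ + v) - g ξ‖ ≤ γinv (‖v‖ / 2) := by
  rcases eq_or_ne v 0 with rfl | hv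
  · simp [hγ.map_zero]
  refine hγ.le_of_le_mul (by positivity) ?_
  linarith [hS.two_mul_modulus_le ξ v]

theorem conjugate_add_le (hS : IsUniformlyEssStronglyConvex h γ g)
    (hγ : IsDivModulusInverse γ γinv) (ξ v : X →L[ℝ] ℝ) :
    conjugate h g (ξ + v) ≤ conjugate h g ξ + v (g ξ) + ‖v‖ * γinv (‖v‖ / 2) := by
  have hconv := hS.toReal_add_le ξ (hS.coe_toReal (ξ + v)).symm
  have hγnn := hS.modulus_nonneg _ (norm_nonneg (g (ξ + v) - g ξ))
  have hv : v (g (ξ + v) - g ξ) ≤ ‖v‖ * ‖g (ξ + v) - g ξ‖ :=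
    (Real.le_norm_self _).trans (v.le_opNorm _)
  have hd : ‖v‖ * ‖g (ξ + v) - g ξ‖ ≤ ‖v‖ * γinv (‖v‖ / 2) :=
    mul_le_mul_of_nonneg_left (hS.norm_sub_le_inv hγ ξ v) (norm_nonneg v)
  simp only [conjugate, map_sub, add_apply] at hconv hv ⊢
  linarith

theorem potential_le_of_le (hS : IsUniformlyEssStronglyConvex h γ g) (hm : ⨅ y, h y = m)
    (U : X →L[ℝ] ℝ) {a b : ℝ} (ha : 0 < a) (hab : a ≤ b) :
    potential h g m a U ≤ potential h g m b U := by
  have hFY := hS.apply_le_add_conjugate (b • U) (hS.coe_toReal (a • U)).symm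
  have hφ := hS.le_toReal hm (a • U)
  rw [potential, potential, div_le_div_iff₀ ha (ha.trans_le hab)]
  simp only [conjugate, smul_apply, smul_eq_mul] at hFY ⊢
  nlinarith [mul_le_mul_of_nonneg_left hab (sub_nonneg.mpr hφ)]

theorem potential_add_le (hS : IsUniformlyEssStronglyConvex h γ g) (hm : ⨅ y, h y = m)
    (hγ : IsDivModulusInverse γ γinv) (U w : X →L[ℝ] ℝ) {η η' : ℝ} (hη' : 0 < η')
    (hη : η' ≤ η) :
    potential h g m η' (U + w) ≤
      potential h g m η U + (w (g (η • U)) + ‖w‖ * γinv (η / 2 * ‖w‖)) := by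
  have hηpos := hη'.trans_le hη
  have hstab := hS.conjugate_add_le hγ (η • U) (η • w)
  rw [norm_smul, Real.norm_of_nonneg hηpos.le, smul_apply, smul_eq_mul] at hstab
  calc potential h g m η' (U + w)
      ≤ (conjugate h g (η • U + η • w) + m) / η := by
        rw [← smul_add]; exact hS.potential_le_of_le hm _ hη' hη
    _ ≤ (conjugate h g (η • U) + m + η * (w (g (η • U)) + ‖w‖ * γinv (η / 2 * ‖w‖))) / η := by
        refine div_le_div_of_nonneg_right ?_ hηpos.le
        rw [show η / 2 * ‖w‖ = η * ‖w‖ / 2 by ring]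
        linarith
    _ = _ := by rw [potential]; field_simp

theorem potential_le_sum (hS : IsUniformlyEssStronglyConvex h γ g) (hm : ⨅ y, h y = m)
    (hγ : IsDivModulusInverse γ γinv) {η : ℕ → ℝ} (hηpos : ∀ t, 0 < η t) (hη : Antitone η)
    (u : ℕ → X →L[ℝ] ℝ) {x : ℕ → X} (hx : ∀ n, x (n + 1) = g (η n • ∑ τ ∈ Icc 1 n, u τ))
    (t : ℕ) :
    potential h g m (η t) (∑ τ ∈ Icc 1 t, u τ) ≤
      ∑ τ ∈ Icc 1 t, (u τ (x τ) + ‖u τ‖ * γinv (η (τ - 1) / 2 * ‖u τ‖)) := by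
  induction t with
  | zero => simp [potential, hS.conjugate_zero hm]
  | succ n ih =>
    rw [sum_Icc_succ_top n.succ_pos, sum_Icc_succ_top n.succ_pos, Nat.add_sub_cancel, hx]
    exact (hS.potential_add_le hm hγ _ _ (hηpos _) (hη n.le_succ)).trans (by gcongr)

end IsUniformlyEssStronglyConvex

end DualAveraging

theorem stmt2_general {X : Type*} [NormedAddCommGroup X] [NormedSpace ℝ X]
    (h : X → EReal) (hproper : ∀ y : X, h y ≠ ⊥)
    (hbar : ℝ) (hbar_inf : (⨅ y : X, h y) = (hbar : EReal))
    (γ : ℝ → ℝ) (hγnn : ∀ r : ℝ, 0 ≤ r → 0 ≤ γ r)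
    -- `g ξ` is the point witnessing uniform essential strong convexity (the maximizer
    -- of `x ↦ ⟨x, ξ⟩ - h x`), lying in `𝒳 = dom h`:
    (g : (X →L[ℝ] ℝ) → X)
    (hgdom : ∀ ξ : X →L[ℝ] ℝ, h (g ξ) ≠ ⊤)
    (hconv : ∀ (ξ : X →L[ℝ] ℝ) (x : X),
      h (g ξ) + ((ξ (x - g ξ) + γ ‖x - g ξ‖ : ℝ) : EReal) ≤ h x)
    -- `γ̃(r) = γ(r)/r` is strictly increasing on `(0,∞)`, onto `(0,∞)`, with
    -- inverse `γinv` extended by `γinv 0 = 0`: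
    (γinv : ℝ → ℝ) (hγinv0 : γinv 0 = 0)
    (hmono : StrictMonoOn (fun r : ℝ => γ r / r) (Set.Ioi 0))
    (honto : ∀ s : ℝ, 0 < s → ∃ r : ℝ, 0 < r ∧ γ r / r = s)
    (hγinv : ∀ r : ℝ, 0 < r → γinv (γ r / r) = r)
    -- learning rates and rewards:
    (η : ℕ → ℝ) (hηpos : ∀ t, 0 < η t) (hηmono : ∀ s t, s ≤ t → η t ≤ η s)
    (u : ℕ → X →L[ℝ] ℝ)
    -- the Dual Averaging iterates:
    (x : ℕ → X)
    (hx : ∀ t : ℕ, 1 ≤ t → x t = g ((η (t - 1)) • (∑ τ ∈ Icc 1 (t - 1), u τ))) :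
    ∀ (t : ℕ), 1 ≤ t → ∀ (x' : X) (c : ℝ), h x' = (c : EReal) →
      (∑ τ ∈ Icc 1 t, u τ x') - ∑ τ ∈ Icc 1 t, u τ (x τ) ≤
        (c - hbar) / η t +
          ∑ τ ∈ Icc 1 t, ‖u τ‖ * γinv (η (τ - 1) / 2 * ‖u τ‖) := by
  intro t _ x' c hc
  have hS : DualAveraging.IsUniformlyEssStronglyConvex h γ g := ⟨hproper, hgdom, hγnn, hconv⟩
  have hpotential := hS.potential_le_sum hbar_inf ⟨hγinv0, hmono, honto, hγinv⟩ hηpos hηmono u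
    (fun n => by simpa using hx (n + 1) n.succ_pos) t
  have hFY := hS.apply_le_add_conjugate (η t • ∑ τ ∈ Icc 1 t, u τ) hc
  rw [smul_apply, smul_eq_mul, _root_.sum_apply] at hFY
  rw [sum_add_distrib] at hpotential
  have hcomparator : ∑ τ ∈ Icc 1 t, u τ x' ≤
      (c - hbar) / η t + DualAveraging.potential h g hbar (η t) (∑ τ ∈ Icc 1 t, u τ) := by
    rw [DualAveraging.potential, ← add_div, le_div_iff₀ (hηpos t)]
    linarith
  linarith

/-- **Dual Averaging regret bound** (Theorem: Dual Averaging Regret).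
`h : X → ℝ ∪ {+∞}` is a regularizer, uniformly essentially strongly convex with modulus `γ`
(witnessed by the maximizer map `g : X* → X`, `g ξ ∈ 𝒳 = dom h`), `h̲ = inf h > -∞`,
`γ̃(r) = γ(r)/r` is a strictly increasing bijection of `(0,∞)` onto `(0,∞)` with inverse
`γinv` extended by `γinv 0 = 0`. For positive nonincreasing learning rates `(η_t)` with
`η_0 = η_1`, rewards `(u_t)` in `X*`, and Dual Averaging iterates
`x_t = g(η_{t-1} Σ_{τ=1}^{t-1} u_τ)`, the regret against any `x ∈ 𝒳` satisfies
`Σ_{τ=1}^t ⟨u_τ, x⟩ - Σ_{τ=1}^t ⟨u_τ, x_τ⟩ ≤ (h(x) - h̲)/η_t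
  + Σ_{τ=1}^t ‖u_τ‖⋆ γinv(η_{τ-1} ‖u_τ‖⋆ / 2)`. -/
theorem stmt2 {X : Type*} [NormedAddCommGroup X] [NormedSpace ℝ X]
    (h : X → EReal) (hproper : ∀ y : X, h y ≠ ⊥)
    (hbar : ℝ) (hbar_inf : (⨅ y : X, h y) = (hbar : EReal))
    (γ : ℝ → ℝ) (hγ0 : γ 0 = 0) (hγnn : ∀ r : ℝ, 0 ≤ r → 0 ≤ γ r)
    -- `g ξ` is the point witnessing uniform essential strong convexity (the maximizer
    -- of `x ↦ ⟨x, ξ⟩ - h x`), lying in `𝒳 = dom h`: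
    (g : (X →L[ℝ] ℝ) → X)
    (hgdom : ∀ ξ : X →L[ℝ] ℝ, h (g ξ) ≠ ⊤)
    (hconv : ∀ (ξ : X →L[ℝ] ℝ) (x : X),
      h (g ξ) + ((ξ (x - g ξ) + γ ‖x - g ξ‖ : ℝ) : EReal) ≤ h x)
    -- `γ̃(r) = γ(r)/r` is strictly increasing on `(0,∞)`, onto `(0,∞)`, with
    -- inverse `γinv` extended by `γinv 0 = 0`:
    (γinv : ℝ → ℝ) (hγinv0 : γinv 0 = 0)
    (hmono : StrictMonoOn (fun r : ℝ => γ r / r) (Set.Ioi 0))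
    (honto : ∀ s : ℝ, 0 < s → ∃ r : ℝ, 0 < r ∧ γ r / r = s)
    (hγinv : ∀ r : ℝ, 0 < r → γinv (γ r / r) = r)
    -- learning rates and rewards:
    (η : ℕ → ℝ) (hηpos : ∀ t, 0 < η t) (hηmono : ∀ s t, s ≤ t → η t ≤ η s)
    (hη0 : η 0 = η 1)
    (u : ℕ → X →L[ℝ] ℝ)
    -- the Dual Averaging iterates:
    (x : ℕ → X)
    (hx : ∀ t : ℕ, 1 ≤ t → x t = g ((η (t - 1)) • (∑ τ ∈ Icc 1 (t - 1), u τ))) :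
    ∀ (t : ℕ), 1 ≤ t → ∀ (x' : X) (c : ℝ), h x' = (c : EReal) →
      (∑ τ ∈ Icc 1 t, u τ x') - ∑ τ ∈ Icc 1 t, u τ (x τ) ≤
        (c - hbar) / η t +
          ∑ τ ∈ Icc 1 t, ‖u τ‖ * γinv (η (τ - 1) / 2 * ‖u τ‖) :=
  stmt2_general h hproper hbar hbar_inf γ hγnn g hgdom hconv γinv hγinv0 hmono honto hγinv η hηpos
    hηmono u x hx
end

section
/- In the continuous two-player zero-sum game setting, suppose the game 𝒢 = (S1, S2, u) has value V, and let (s^1_t)_{t≥1}, (s^2_t)_{t≥1} be sequences of plays such that player 1 has sublinear realized regret. Then liminf_{t→∞} (1/t)·Σ_{τ=1}^t u(s^1_τ, s^2_τ) ≥ V. -/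
open Finset MeasureTheory Filter
open scoped ENNReal

/-!
Let `ν_t` be the empirical distribution of player 2's first `t` plays. Since
`V = inf_y sup_x ū(x, y) ≤ sup_x ū(x, ν_t)`, and a mixed strategy of player 1 never beats the
best pure one, some action `a` earns `∫ u(a, ·) dν_t ≥ V`: the best fixed action in hindsight
averages at least `V` over the first `t` rounds. The realized average payoff is that best
average minus the average regret, whose limsup is at most `0`.
-/

theorem cesaro_le {g : ℕ → ℝ} {C : ℝ} (hg : ∀ τ, g τ ≤ C) (hC : 0 ≤ C) (t : ℕ) :
    (1 / (t : ℝ)) * ∑ τ ∈ Icc 1 t, g τ ≤ C := by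
  rcases Nat.eq_zero_or_pos t with rfl | ht
  · simpa using hC
  calc (1 / (t : ℝ)) * ∑ τ ∈ Icc 1 t, g τ ≤ (1 / (t : ℝ)) * (t * C) := by
        gcongr
        exact (sum_le_card_nsmul (Icc 1 t) g C fun τ _ => hg τ).trans_eq (by simp)
    _ = C := by field_simp

theorem cesaro_iSup_sub_le {ι : Type*} {g : ι → ℕ → ℝ} {h : ℕ → ℝ} {C : ℝ}
    (hg : ∀ a τ, g a τ ≤ C) (hh : ∀ τ, -C ≤ h τ) (hC : 0 ≤ C) (t : ℕ) :
    (1 / (t : ℝ)) * ((⨆ a, ∑ τ ∈ Icc 1 t, g a τ) - ∑ τ ∈ Icc 1 t, h τ) ≤ 2 * C := by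
  have hsup : (1 / (t : ℝ)) * ⨆ a, ∑ τ ∈ Icc 1 t, g a τ ≤ C := by
    rw [Real.mul_iSup_of_nonneg (by positivity)]
    exact Real.iSup_le (fun a => cesaro_le (hg a) hC t) hC
  have hneg : (1 / (t : ℝ)) * ∑ τ ∈ Icc 1 t, -h τ ≤ C :=
    cesaro_le (fun τ => neg_le.mp (hh τ)) hC t
  rw [sum_neg_distrib] at hneg
  linarith [mul_sub (1 / (t : ℝ)) (⨆ a, ∑ τ ∈ Icc 1 t, g a τ) (∑ τ ∈ Icc 1 t, h τ)]

theorem le_liminf_of_eventually_sub_le {α : Type*} {l : Filter α} [l.NeBot] {f r : α → ℝ}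
    {V : ℝ} (hf : IsBoundedUnder (· ≤ ·) l f) (hr : IsBoundedUnder (· ≤ ·) l r)
    (hr₀ : limsup r l ≤ 0) (h : ∀ᶠ t in l, V - r t ≤ f t) : V ≤ liminf f l := by
  refine le_of_forall_pos_le_add fun ε hε => ?_
  have hrε : ∀ᶠ t in l, r t < ε := eventually_lt_of_limsup_lt (hr₀.trans_lt hε) hr
  refine sub_le_iff_le_add.mp (le_liminf_of_le hf.isCoboundedUnder_ge ?_)
  filter_upwards [h, hrε] with t ht hrt
  linarith

noncomputable def empiricalMeasure {X : Type*} [MeasurableSpace X] (x : ℕ → X) (t : ℕ) :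
    Measure X :=
  (t : ℝ≥0∞)⁻¹ • ∑ τ ∈ Icc 1 t, Measure.dirac (x τ)

section Empirical

variable {X : Type*} [MeasurableSpace X] (x : ℕ → X) {t : ℕ}

theorem isProbabilityMeasure_empiricalMeasure (ht : t ≠ 0) :
    IsProbabilityMeasure (empiricalMeasure x t) := by
  constructor
  simp [empiricalMeasure, ENNReal.inv_mul_cancel, ht]

theorem integral_empiricalMeasure [MeasurableSingletonClass X] (g : X → ℝ) :
    ∫ y, g y ∂(empiricalMeasure x t) = (1 / (t : ℝ)) * ∑ τ ∈ Icc 1 t, g (x τ) := by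
  rw [empiricalMeasure, integral_smul_measure,
    integral_finsetSum_measure fun τ _ => integrable_dirac (by simp)]
  simp [integral_dirac]

end Empirical

theorem integral_prod_le_iSup_integral {S1 S2 : Type*}
    [MetricSpace S1] [CompactSpace S1] [MeasurableSpace S1] [BorelSpace S1]
    [MetricSpace S2] [CompactSpace S2] [MeasurableSpace S2] [BorelSpace S2]
    (u : C(S1 × S2, ℝ)) (x1 : ProbabilityMeasure S1) (x2 : ProbabilityMeasure S2) :
    ∫ s, u s ∂((x1 : Measure S1).prod (x2 : Measure S2)) ≤
      ⨆ a : S1, ∫ b, u (a, b) ∂(x2 : Measure S2) := by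
  have hbdd : BddAbove (Set.range fun a : S1 => ∫ b, u (a, b) ∂(x2 : Measure S2)) := by
    refine ⟨‖u‖, Set.forall_mem_range.mpr fun a => ?_⟩
    simpa using (le_abs_self _).trans (norm_integral_le_of_norm_le_const (μ := (x2 : Measure S2))
      (ae_of_all _ fun b => u.norm_coe_le_norm (a, b)))
  have hint : Integrable u ((x1 : Measure S1).prod (x2 : Measure S2)) :=
    u.continuous.integrable_of_hasCompactSupport (.of_compactSpace _)
  rw [integral_prod _ hint]
  calc ∫ a, ∫ b, u (a, b) ∂(x2 : Measure S2) ∂(x1 : Measure S1)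
      ≤ ∫ _, ⨆ a : S1, ∫ b, u (a, b) ∂(x2 : Measure S2) ∂(x1 : Measure S1) :=
        integral_mono hint.integral_prod_left (integrable_const _) fun a => le_ciSup hbdd a
    _ = ⨆ a : S1, ∫ b, u (a, b) ∂(x2 : Measure S2) := by simp

theorem le_iSup_integral_of_iInf_iSup_eq {S1 S2 : Type*}
    [MetricSpace S1] [CompactSpace S1] [Nonempty S1] [MeasurableSpace S1] [BorelSpace S1]
    [MetricSpace S2] [CompactSpace S2] [MeasurableSpace S2] [BorelSpace S2]
    (u : C(S1 × S2, ℝ)) {V : ℝ}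
    (hval : (⨅ x2 : ProbabilityMeasure S2, ⨆ x1 : ProbabilityMeasure S1,
        ∫ s, u s ∂((x1 : Measure S1).prod (x2 : Measure S2))) = V)
    (x2 : ProbabilityMeasure S2) :
    V ≤ ⨆ a : S1, ∫ b, u (a, b) ∂(x2 : Measure S2) := by
  have habs (x1 : ProbabilityMeasure S1) (y2 : ProbabilityMeasure S2) :
      |∫ s, u s ∂((x1 : Measure S1).prod (y2 : Measure S2))| ≤ ‖u‖ := by
    simpa using norm_integral_le_of_norm_le_const
      (μ := (x1 : Measure S1).prod (y2 : Measure S2)) (ae_of_all _ u.norm_coe_le_norm)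
  let δ : ProbabilityMeasure S1 := ⟨Measure.dirac (Classical.arbitrary S1), inferInstance⟩
  have hmixed : V ≤ ⨆ x1 : ProbabilityMeasure S1,
      ∫ s, u s ∂((x1 : Measure S1).prod (x2 : Measure S2)) := by
    refine hval ▸ ciInf_le ⟨-‖u‖, Set.forall_mem_range.mpr fun y2 => ?_⟩ x2
    exact (neg_le_of_abs_le (habs δ y2)).trans
      (le_ciSup ⟨‖u‖, Set.forall_mem_range.mpr fun x1 => (le_abs_self _).trans (habs x1 y2)⟩ δ)
  have : Nonempty (ProbabilityMeasure S1) := ⟨δ⟩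
  exact hmixed.trans (ciSup_le fun x1 => integral_prod_le_iSup_integral u x1 x2)

theorem le_cesaro_iSup_of_iInf_iSup_eq {S1 S2 : Type*}
    [MetricSpace S1] [CompactSpace S1] [Nonempty S1] [MeasurableSpace S1] [BorelSpace S1]
    [MetricSpace S2] [CompactSpace S2] [MeasurableSpace S2] [BorelSpace S2]
    (u : C(S1 × S2, ℝ)) {V : ℝ}
    (hval : (⨅ x2 : ProbabilityMeasure S2, ⨆ x1 : ProbabilityMeasure S1,
        ∫ s, u s ∂((x1 : Measure S1).prod (x2 : Measure S2))) = V)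
    (s2 : ℕ → S2) {t : ℕ} (ht : t ≠ 0) :
    V ≤ (1 / (t : ℝ)) * ⨆ a : S1, ∑ τ ∈ Icc 1 t, u (a, s2 τ) := by
  let ν : ProbabilityMeasure S2 :=
    ⟨empiricalMeasure s2 t, isProbabilityMeasure_empiricalMeasure s2 ht⟩
  rw [Real.mul_iSup_of_nonneg (by positivity)]
  simpa [ν, integral_empiricalMeasure] using le_iSup_integral_of_iInf_iSup_eq u hval ν

theorem stmt13_general {S1 S2 : Type*}
    [MetricSpace S1] [CompactSpace S1] [Nonempty S1] [MeasurableSpace S1] [BorelSpace S1]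
    [MetricSpace S2] [CompactSpace S2] [MeasurableSpace S2] [BorelSpace S2]
    (u : C(S1 × S2, ℝ)) (V : ℝ)
    (hval₂ : (⨅ x2 : ProbabilityMeasure S2, ⨆ x1 : ProbabilityMeasure S1,
        ∫ s, u s ∂((x1 : Measure S1).prod (x2 : Measure S2))) = V)
    -- the plays, along which player 1 has sublinear realized regret
    (s1 : ℕ → S1) (s2 : ℕ → S2)
    (hreg1 : limsup (fun t : ℕ => (1 / (t : ℝ)) *
        ((⨆ a : S1, ∑ τ ∈ Icc 1 t, u (a, s2 τ)) -
          ∑ τ ∈ Icc 1 t, u (s1 τ, s2 τ))) atTop ≤ 0) :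
    V ≤ liminf (fun t : ℕ => (1 / (t : ℝ)) * ∑ τ ∈ Icc 1 t, u (s1 τ, s2 τ)) atTop := by
  have hu (s : S1 × S2) : |u s| ≤ ‖u‖ := u.norm_coe_le_norm s
  refine le_liminf_of_eventually_sub_le
    (isBoundedUnder_of ⟨‖u‖, cesaro_le (fun τ => (le_abs_self _).trans (hu _)) (norm_nonneg u)⟩)
    (isBoundedUnder_of ⟨2 * ‖u‖, cesaro_iSup_sub_le (fun a τ => (le_abs_self _).trans (hu _))
      (fun τ => neg_le_of_abs_le (hu _)) (norm_nonneg u)⟩) hreg1 ?_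
  filter_upwards [eventually_ne_atTop 0] with t ht
  have hbest := le_cesaro_iSup_of_iInf_iSup_eq u hval₂ s2 ht
  linarith [mul_sub (1 / (t : ℝ)) (⨆ a : S1, ∑ τ ∈ Icc 1 t, u (a, s2 τ))
    (∑ τ ∈ Icc 1 t, u (s1 τ, s2 τ))]

/-- **Sublinear regret of player 1 lower-bounds the average payoff by the value.**
In a continuous two-player zero-sum game `(S1, S2, u)` with value `V`, if along the
plays `(s¹_t), (s²_t)` player 1 has sublinear realized regret, then
`liminf_{t→∞} (1/t) Σ_{τ=1}^t u(s¹_τ, s²_τ) ≥ V`. -/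
theorem stmt13 {S1 S2 : Type*}
    [MetricSpace S1] [CompactSpace S1] [Nonempty S1] [MeasurableSpace S1] [BorelSpace S1]
    [MetricSpace S2] [CompactSpace S2] [Nonempty S2] [MeasurableSpace S2] [BorelSpace S2]
    (u : C(S1 × S2, ℝ)) (V : ℝ)
    -- the game has value `V`
    (hval₁ : (⨆ x1 : ProbabilityMeasure S1, ⨅ x2 : ProbabilityMeasure S2,
        ∫ s, u s ∂((x1 : Measure S1).prod (x2 : Measure S2))) = V)
    (hval₂ : (⨅ x2 : ProbabilityMeasure S2, ⨆ x1 : ProbabilityMeasure S1,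
        ∫ s, u s ∂((x1 : Measure S1).prod (x2 : Measure S2))) = V)
    -- the plays, along which player 1 has sublinear realized regret
    (s1 : ℕ → S1) (s2 : ℕ → S2)
    (hreg1 : limsup (fun t : ℕ => (1 / (t : ℝ)) *
        ((⨆ a : S1, ∑ τ ∈ Icc 1 t, u (a, s2 τ)) -
          ∑ τ ∈ Icc 1 t, u (s1 τ, s2 τ))) atTop ≤ 0) :
    V ≤ liminf (fun t : ℕ => (1 / (t : ℝ)) * ∑ τ ∈ Icc 1 t, u (s1 τ, s2 τ)) atTop :=
  stmt13_general u V hval₂ s1 s2 hreg1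
end

section
/- (Weak convergence of the empirical distributions of play to the set of Nash equilibria — deterministic core.) In the continuous two-player zero-sum game setting, suppose the game 𝒢 = (S1, S2, u) has value V, and let (s^1_t)_{t≥1}, (s^2_t)_{t≥1} be sequences of plays along which both players have sublinear realized regret. For each t let x̂^i_t := (1/t)·Σ_{τ=1}^t δ_{s^i_τ} be the marginal empirical distribution of play of player i. Then every limit point (z1, z2) ∈ 𝒫1 × 𝒫2 of the sequence (x̂^1_t, x̂^2_t)_{t≥1} in the weak topology is a Nash equilibrium of 𝒢, i.e. satisfies sup_{x1∈𝒫1} ū(x1, z2) = V = inf_{x2∈𝒫2} ū(z1, x2). Consequently the sequence (x̂^1_t, x̂^2_t) converges to the set of Nash equilibria of 𝒢 in the weak topology. -/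
/-!
For fixed deviations `a` of player 1 and `b` of player 2, the two regret inequalities add up to
`(1/t) Σ_τ u(a, s²_τ) - (1/t) Σ_τ u(s¹_τ, b) ≤ regret₁(t) + regret₂(t)`, the realized payoffs
`u(s¹_τ, s²_τ)` cancelling. Along the subsequence the left side tends to `ū(δ_a, z2) - ū(z1, δ_b)`,
so `ū(δ_a, z2) ≤ ū(z1, δ_b)`; integrating in `a` and `b` gives
`sup_{x1} ū(x1, z2) ≤ inf_{x2} ū(z1, x2)`. The value squeezes this chain:
`V = inf sup ≤ sup_{x1} ū(x1, z2)` and `inf_{x2} ū(z1, x2) ≤ sup inf = V`.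
-/

open Finset MeasureTheory Filter Topology

section Regret

variable {X Y : Type*}

noncomputable def realizedRegret (f : X × Y → ℝ) (x : ℕ → X) (y : ℕ → Y) (t : ℕ) : ℝ :=
  (1 / (t : ℝ)) * ((⨆ a : X, ∑ τ ∈ Icc 1 t, f (a, y τ)) - ∑ τ ∈ Icc 1 t, f (x τ, y τ))

lemma abs_sum_Icc_le_mul {ι : Type*} {f : ι → ℝ} {C : ℝ} (hC : ∀ p, |f p| ≤ C) (z : ℕ → ι)
    (t : ℕ) : |∑ τ ∈ Icc 1 t, f (z τ)| ≤ t * C := by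
  simpa using (abs_sum_le_sum_abs _ _).trans (sum_le_card_nsmul (Icc 1 t) _ C fun τ _ => hC (z τ))

variable {f : X × Y → ℝ} {C : ℝ}

lemma realizedRegret_le (hC : ∀ p, |f p| ≤ C) (x : ℕ → X) (y : ℕ → Y) (t : ℕ) :
    realizedRegret f x y t ≤ 2 * C := by
  have : Nonempty X := ⟨x 0⟩
  have hsup : (⨆ a, ∑ τ ∈ Icc 1 t, f (a, y τ)) ≤ t * C :=
    ciSup_le fun a => le_of_abs_le (abs_sum_Icc_le_mul hC (fun τ => (a, y τ)) t)
  have hplay := neg_le_of_abs_le (abs_sum_Icc_le_mul hC (fun τ => (x τ, y τ)) t)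
  rcases t.eq_zero_or_pos with rfl | ht
  · simpa [realizedRegret] using (abs_nonneg _).trans (hC (x 0, y 0))
  · rw [realizedRegret, one_div_mul_eq_div, div_le_iff₀ (by positivity)]
    linarith

lemma sub_le_realizedRegret (hC : ∀ p, |f p| ≤ C) (x : ℕ → X) (y : ℕ → Y) (t : ℕ) (a : X) :
    (1 / (t : ℝ)) * ∑ τ ∈ Icc 1 t, f (a, y τ) - (1 / (t : ℝ)) * ∑ τ ∈ Icc 1 t, f (x τ, y τ) ≤
      realizedRegret f x y t := by
  have hbdd : BddAbove (Set.range fun a => ∑ τ ∈ Icc 1 t, f (a, y τ)) :=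
    ⟨t * C, by rintro _ ⟨a, rfl⟩; exact le_of_abs_le (abs_sum_Icc_le_mul hC _ t)⟩
  rw [realizedRegret, ← mul_sub]
  gcongr
  exact le_ciSup hbdd a

lemma sub_le_realizedRegret_add_realizedRegret (hC : ∀ p, |f p| ≤ C) (x : ℕ → X) (y : ℕ → Y)
    (t : ℕ) (a : X) (b : Y) :
    (1 / (t : ℝ)) * ∑ τ ∈ Icc 1 t, f (a, y τ) - (1 / (t : ℝ)) * ∑ τ ∈ Icc 1 t, f (x τ, b) ≤
      realizedRegret f x y t + realizedRegret (fun p => -f p.swap) y x t := by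
  have h₁ := sub_le_realizedRegret hC x y t a
  have h₂ := sub_le_realizedRegret (f := fun p => -f p.swap) (fun p => by simpa using hC p.swap)
    y x t b
  simp only [Prod.swap_prod_mk, sum_neg_distrib, mul_neg] at h₂
  linarith

lemma le_of_tendsto_of_limsup_realizedRegret_nonpos (hC : ∀ p, |f p| ≤ C) {x : ℕ → X}
    {y : ℕ → Y} (hreg₁ : limsup (realizedRegret f x y) atTop ≤ 0)
    (hreg₂ : limsup (realizedRegret (fun p => -f p.swap) y x) atTop ≤ 0) {φ : ℕ → ℕ}
    (hφ : Tendsto φ atTop atTop) {a : X} {b : Y} {L₁ L₂ : ℝ}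
    (h₁ : Tendsto (fun k => (1 / (φ k : ℝ)) * ∑ τ ∈ Icc 1 (φ k), f (a, y τ)) atTop (𝓝 L₁))
    (h₂ : Tendsto (fun k => (1 / (φ k : ℝ)) * ∑ τ ∈ Icc 1 (φ k), f (x τ, b)) atTop (𝓝 L₂)) :
    L₁ ≤ L₂ := by
  have hC' : ∀ p, |-f (Prod.swap p)| ≤ C := fun p => by simpa using hC p.swap
  rw [← sub_nonpos]
  refine le_of_forall_pos_le_add fun ε hε => le_of_tendsto (h₁.sub h₂) ?_
  have e₁ := eventually_lt_of_limsup_lt (hreg₁.trans_lt (half_pos hε))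
    (isBoundedUnder_of ⟨_, realizedRegret_le hC x y⟩)
  have e₂ := eventually_lt_of_limsup_lt (hreg₂.trans_lt (half_pos hε))
    (isBoundedUnder_of ⟨_, realizedRegret_le hC' y x⟩)
  filter_upwards [hφ.eventually e₁, hφ.eventually e₂] with k hk₁ hk₂
  linarith [sub_le_realizedRegret_add_realizedRegret hC x y (φ k) a b]

end Regret

lemma integral_le_integral_of_forall_le {X Y : Type*} [MeasurableSpace X] [MeasurableSpace Y]
    {μ : Measure X} {ν : Measure Y} [IsProbabilityMeasure μ] [IsProbabilityMeasure ν]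
    {g : X → ℝ} {h : Y → ℝ} (hg : Integrable g μ) (hh : Integrable h ν)
    (hgh : ∀ a b, g a ≤ h b) : ∫ a, g a ∂μ ≤ ∫ b, h b ∂ν := by
  have hg_le : ∀ a, g a ≤ ∫ b, h b ∂ν := fun a => by
    simpa using integral_mono (integrable_const (g a)) hh (hgh a)
  simpa using integral_mono hg (integrable_const _) hg_le

section Minimax

variable {ι κ : Type*} {F : ι → κ → ℝ} {C : ℝ}

lemma ciInf_iSup_le_iSup [Nonempty ι] (hF : ∀ i k, |F i k| ≤ C) (k : κ) :
    ⨅ k', ⨆ i, F i k' ≤ ⨆ i, F i k := by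
  refine ciInf_le ⟨-C, ?_⟩ k
  rintro _ ⟨k', rfl⟩
  obtain ⟨i⟩ := ‹Nonempty ι›
  exact (neg_le_of_abs_le (hF i k')).trans
    (le_ciSup ⟨C, by rintro _ ⟨i, rfl⟩; exact le_of_abs_le (hF i k')⟩ i)

lemma iInf_le_ciSup_iInf [Nonempty κ] (hF : ∀ i k, |F i k| ≤ C) (i : ι) :
    ⨅ k, F i k ≤ ⨆ i', ⨅ k, F i' k := by
  refine le_ciSup (f := fun i' => ⨅ k, F i' k) ⟨C, ?_⟩ i
  rintro _ ⟨i', rfl⟩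
  obtain ⟨k⟩ := ‹Nonempty κ›
  exact (ciInf_le ⟨-C, by rintro _ ⟨k, rfl⟩; exact neg_le_of_abs_le (hF i' k)⟩ k).trans
    (le_of_abs_le (hF i' k))

end Minimax

theorem stmt15_general {S1 S2 : Type*}
    [MetricSpace S1] [CompactSpace S1] [MeasurableSpace S1] [BorelSpace S1]
    [MetricSpace S2] [CompactSpace S2] [MeasurableSpace S2] [BorelSpace S2]
    (u : C(S1 × S2, ℝ)) (V : ℝ)
    (hval₁ : (⨆ x1 : ProbabilityMeasure S1, ⨅ x2 : ProbabilityMeasure S2,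
        ∫ s, u s ∂((x1 : Measure S1).prod (x2 : Measure S2))) = V)
    (hval₂ : (⨅ x2 : ProbabilityMeasure S2, ⨆ x1 : ProbabilityMeasure S1,
        ∫ s, u s ∂((x1 : Measure S1).prod (x2 : Measure S2))) = V)
    (s1 : ℕ → S1) (s2 : ℕ → S2)
    -- both players have sublinear realized regret
    (hreg1 : limsup (fun t : ℕ => (1 / (t : ℝ)) *
        ((⨆ a : S1, ∑ τ ∈ Icc 1 t, u (a, s2 τ)) -
          ∑ τ ∈ Icc 1 t, u (s1 τ, s2 τ))) atTop ≤ 0)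
    (hreg2 : limsup (fun t : ℕ => (1 / (t : ℝ)) *
        ((⨆ b : S2, ∑ τ ∈ Icc 1 t, -u (s1 τ, b)) -
          ∑ τ ∈ Icc 1 t, -u (s1 τ, s2 τ))) atTop ≤ 0)
    -- `(z1, z2)` is a weak limit point of the empirical distributions of play,
    -- witnessed by the strictly increasing subsequence `φ`
    (z1 : ProbabilityMeasure S1) (z2 : ProbabilityMeasure S2)
    (φ : ℕ → ℕ) (hφ : StrictMono φ)
    (hlim1 : ∀ f : C(S1, ℝ),
      Tendsto (fun k => (1 / (φ k : ℝ)) * ∑ τ ∈ Icc 1 (φ k), f (s1 τ)) atTop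
        (nhds (∫ a, f a ∂(z1 : Measure S1))))
    (hlim2 : ∀ f : C(S2, ℝ),
      Tendsto (fun k => (1 / (φ k : ℝ)) * ∑ τ ∈ Icc 1 (φ k), f (s2 τ)) atTop
        (nhds (∫ b, f b ∂(z2 : Measure S2)))) :
    (⨆ x1 : ProbabilityMeasure S1,
        ∫ s, u s ∂((x1 : Measure S1).prod (z2 : Measure S2))) = V ∧
    (⨅ x2 : ProbabilityMeasure S2,
        ∫ s, u s ∂((z1 : Measure S1).prod (x2 : Measure S2))) = V := by
  have : Nonempty (ProbabilityMeasure S1) := ⟨z1⟩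
  have : Nonempty (ProbabilityMeasure S2) := ⟨z2⟩
  have hu : ∀ p, |u p| ≤ ‖u‖ := u.norm_coe_le_norm
  have hint : ∀ (μ : ProbabilityMeasure S1) (ν : ProbabilityMeasure S2),
      Integrable u ((μ : Measure S1).prod ν) := fun _ _ =>
    u.continuous.integrable_of_hasCompactSupport (.of_compactSpace _)
  have hbound : ∀ (μ : ProbabilityMeasure S1) (ν : ProbabilityMeasure S2),
      |∫ s, u s ∂((μ : Measure S1).prod ν)| ≤ ‖u‖ := fun μ ν => by
    simpa using (BoundedContinuousFunction.mkOfCompact u).norm_integral_le_norm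
      ((μ : Measure S1).prod ν)
  have hmarg : ∀ a b, ∫ b', u (a, b') ∂(z2 : Measure S2) ≤ ∫ a', u (a', b) ∂(z1 : Measure S1) :=
    fun a b => le_of_tendsto_of_limsup_realizedRegret_nonpos hu hreg1 hreg2 hφ.tendsto_atTop
      (hlim2 (u.curry a)) (hlim1 ((u.comp .prodSwap).curry b))
  have hAB : (⨆ x1 : ProbabilityMeasure S1,
        ∫ s, u s ∂((x1 : Measure S1).prod (z2 : Measure S2))) ≤
      ⨅ x2 : ProbabilityMeasure S2, ∫ s, u s ∂((z1 : Measure S1).prod (x2 : Measure S2)) :=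
    ciSup_le fun x1 => le_ciInf fun x2 => by
      rw [integral_prod _ (hint x1 z2), integral_prod_symm _ (hint z1 x2)]
      exact integral_le_integral_of_forall_le (hint x1 z2).integral_prod_left
        (hint z1 x2).integral_prod_right hmarg
  have hVA := hval₂ ▸ ciInf_iSup_le_iSup hbound z2
  have hBV := hval₁ ▸ iInf_le_ciSup_iInf hbound z1
  exact ⟨by linarith, by linarith⟩

/-- **Weak limit points of the empirical distributions of play are Nash equilibria.**
In a continuous two-player zero-sum game `(S1, S2, u)` with value `V`, suppose both
players have sublinear realized regret along the plays `(s¹_t), (s²_t)`.  If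
`(z1, z2)` is a weak limit point of the marginal empirical distributions of play
`x̂ⁱ_t = (1/t) Σ_{τ=1}^t δ_{sⁱ_τ}` (i.e. along some strictly increasing subsequence the
empirical averages of every continuous function converge to its integral against `zᵢ`),
then `(z1, z2)` is a Nash equilibrium:
`sup_{x1} ū(x1, z2) = V = inf_{x2} ū(z1, x2)`. -/
theorem stmt15 {S1 S2 : Type*}
    [MetricSpace S1] [CompactSpace S1] [Nonempty S1] [MeasurableSpace S1] [BorelSpace S1]
    [MetricSpace S2] [CompactSpace S2] [Nonempty S2] [MeasurableSpace S2] [BorelSpace S2]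
    (u : C(S1 × S2, ℝ)) (V : ℝ)
    (hval₁ : (⨆ x1 : ProbabilityMeasure S1, ⨅ x2 : ProbabilityMeasure S2,
        ∫ s, u s ∂((x1 : Measure S1).prod (x2 : Measure S2))) = V)
    (hval₂ : (⨅ x2 : ProbabilityMeasure S2, ⨆ x1 : ProbabilityMeasure S1,
        ∫ s, u s ∂((x1 : Measure S1).prod (x2 : Measure S2))) = V)
    (s1 : ℕ → S1) (s2 : ℕ → S2)
    -- both players have sublinear realized regret
    (hreg1 : limsup (fun t : ℕ => (1 / (t : ℝ)) *
        ((⨆ a : S1, ∑ τ ∈ Icc 1 t, u (a, s2 τ)) -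
          ∑ τ ∈ Icc 1 t, u (s1 τ, s2 τ))) atTop ≤ 0)
    (hreg2 : limsup (fun t : ℕ => (1 / (t : ℝ)) *
        ((⨆ b : S2, ∑ τ ∈ Icc 1 t, -u (s1 τ, b)) -
          ∑ τ ∈ Icc 1 t, -u (s1 τ, s2 τ))) atTop ≤ 0)
    -- `(z1, z2)` is a weak limit point of the empirical distributions of play,
    -- witnessed by the strictly increasing subsequence `φ`
    (z1 : ProbabilityMeasure S1) (z2 : ProbabilityMeasure S2)
    (φ : ℕ → ℕ) (hφ : StrictMono φ) (hφ1 : ∀ k, 1 ≤ φ k)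
    (hlim1 : ∀ f : C(S1, ℝ),
      Tendsto (fun k => (1 / (φ k : ℝ)) * ∑ τ ∈ Icc 1 (φ k), f (s1 τ)) atTop
        (nhds (∫ a, f a ∂(z1 : Measure S1))))
    (hlim2 : ∀ f : C(S2, ℝ),
      Tendsto (fun k => (1 / (φ k : ℝ)) * ∑ τ ∈ Icc 1 (φ k), f (s2 τ)) atTop
        (nhds (∫ b, f b ∂(z2 : Measure S2)))) :
    (⨆ x1 : ProbabilityMeasure S1,
        ∫ s, u s ∂((x1 : Measure S1).prod (z2 : Measure S2))) = V ∧
    (⨅ x2 : ProbabilityMeasure S2,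
        ∫ s, u s ∂((z1 : Measure S1).prod (x2 : Measure S2))) = V :=
  stmt15_general u V hval₁ hval₂ s1 s2 hreg1 hreg2 z1 z2 φ hφ hlim1 hlim2
end

section
/- (Continuous-time Dual Averaging regret bound.) Let X be a reflexive real Banach space with dual X* and pairing ⟨x, ξ⟩ := ξ(x). Let h : X → ℝ ∪ {+∞} be proper with effective domain 𝒳 and h̲ := inf_{x∈X} h(x) ∈ ℝ, and suppose its conjugate h*(ξ) := sup_{x∈X} (⟨x, ξ⟩ − h(x)) is finite and Fréchet differentiable on X*, with Fréchet derivative Dh*(ξ) ∈ 𝒳 equal to the unique maximizer of x ↦ ⟨x, ξ⟩ − h(x), and with Dh* norm-continuous. Let u^c : [0,∞) → X* be locally Bochner integrable with sup_{x∈𝒳} |⟨u^c_t, x⟩| ≤ M < ∞ for all t, and let η^c : [0,∞) → (0,∞) be continuously differentiable and nonincreasing. Define x^c_t := Dh*( η^c_t · ∫_0^t u^c_τ dτ ). Then for every x ∈ X and every t ≥ 0: ∫_0^t ⟨u^c_τ, x⟩ dτ − ∫_0^t ⟨u^c_τ, x^c_τ⟩ dτ ≤ (h(x) − h̲)/η^c_t.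 -/
open MeasureTheory intervalIntegral NormedSpace

/-!
The dual-averaging potential `G s = (h*(η_s U_s) + h̲) / η_s`, with `U_s = ∫_0^s u`, equals
`sup_y (⟨U_s, y⟩ - (h y - h̲) / η_s)` and is attained at `x_s`. Comparing `G r` with the
value of the supremum defining `G s` at the point `x_r` gives, for `s ≤ r`,
`G r - G s ≤ ∫_s^r ⟨u_τ, x_r⟩ dτ`, because `h x_r ≥ h̲` and `1 / η` is nondecreasing.
Summing over a fine partition and using the uniform continuity of `x` on `[0, t]` yields
`G t - G 0 ≤ ∫_0^t ⟨u_τ, x_τ⟩ dτ`, while `G 0 ≤ 0` and Fenchel–Young at `x` give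
`∫_0^t ⟨u_τ, x⟩ dτ ≤ G t + (h x - h̲) / η_t`.
-/

theorem sub_le_sub_of_forall_short_steps {G H : ℝ → ℝ} {a b δ : ℝ} (hab : a ≤ b) (hδ : 0 < δ)
    (hstep : ∀ s r, a ≤ s → s ≤ r → r ≤ b → r - s < δ → G r - G s ≤ H r - H s) :
    G b - G a ≤ H b - H a := by
  obtain ⟨n, hn⟩ := exists_nat_gt ((b - a) / δ)
  have hn0 : (0 : ℝ) < n := lt_of_le_of_lt (div_nonneg (sub_nonneg.2 hab) hδ.le) hn
  set d := (b - a) / n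
  have hd0 : 0 ≤ d := div_nonneg (sub_nonneg.2 hab) hn0.le
  have hdδ : d < δ := by
    rw [div_lt_iff₀ hn0]; rw [div_lt_iff₀ hδ] at hn; linarith
  have hpartition : ∀ i : ℕ, i ≤ n → G (a + i * d) - G a ≤ H (a + i * d) - H a := by
    intro i hi
    induction i with
    | zero => simp
    | succ i ih =>
      have hi' : ((i + 1 : ℕ) : ℝ) ≤ n := by exact_mod_cast hi
      have hend : a + ((i + 1 : ℕ) : ℝ) * d ≤ b := by
        have : ((i + 1 : ℕ) : ℝ) * d ≤ n * d := mul_le_mul_of_nonneg_right hi' hd0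
        rw [mul_div_cancel₀ _ hn0.ne'] at this
        linarith
      have := hstep (a + i * d) (a + ((i + 1 : ℕ) : ℝ) * d) (by nlinarith)
        (by push_cast; nlinarith) hend (by push_cast; linarith)
      linarith [ih (Nat.le_of_succ_le hi)]
  simpa [d, mul_div_cancel₀ _ hn0.ne'] using hpartition n le_rfl

section Pairing

variable {E : Type*} [NormedAddCommGroup E] [NormedSpace ℝ E] {u : ℝ → StrongDual ℝ E}
  {x : ℝ → E} {a b : ℝ}

theorem IntervalIntegrable.apply_of_continuousOn (hu : IntervalIntegrable u volume a b)
    (hx : ContinuousOn x (Set.uIcc a b)) :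
    IntervalIntegrable (fun τ => u τ (x τ)) volume a b := by
  rw [intervalIntegrable_iff'] at *
  obtain ⟨B, hB⟩ := isCompact_uIcc.exists_bound_of_continuousOn hx
  refine Integrable.mono' (hu.norm.mul_const B) ?_ ?_
  · exact isBoundedBilinearMap_apply.continuous.comp_aestronglyMeasurable₂
      hu.aestronglyMeasurable (hx.aestronglyMeasurable measurableSet_uIcc)
  · filter_upwards [ae_restrict_mem measurableSet_uIcc] with τ hτ
    calc ‖u τ (x τ)‖ ≤ ‖u τ‖ * ‖x τ‖ := (u τ).le_opNorm _
      _ ≤ ‖u τ‖ * B := by gcongr; exact hB τ hτ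

theorem integral_apply_le_add_of_forall_norm_sub_le {y : E} {ε : ℝ} (hab : a ≤ b)
    (hu : IntervalIntegrable u volume a b) (hx : ContinuousOn x (Set.Icc a b))
    (hy : ∀ τ ∈ Set.Icc a b, ‖y - x τ‖ ≤ ε) :
    ∫ τ in a..b, u τ y ≤ (∫ τ in a..b, u τ (x τ)) + ε * ∫ τ in a..b, ‖u τ‖ := by
  have hux : IntervalIntegrable (fun τ => u τ (x τ)) volume a b :=
    hu.apply_of_continuousOn (by rwa [Set.uIcc_of_le hab])
  have huε : IntervalIntegrable (fun τ => ε * ‖u τ‖) volume a b := hu.norm.const_mul ε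
  rw [← intervalIntegral.integral_const_mul, ← integral_add hux huε]
  refine integral_mono_on hab (hu.apply_of_continuousOn continuousOn_const)
    (hux.add huε) fun τ hτ => ?_
  calc u τ y = u τ (x τ) + u τ (y - x τ) := by rw [map_sub]; ring
    _ ≤ u τ (x τ) + ‖u τ‖ * ‖y - x τ‖ := by gcongr; exact (le_abs_self _).trans ((u τ).le_opNorm _)
    _ ≤ u τ (x τ) + ε * ‖u τ‖ := by rw [mul_comm]; gcongr; exact hy τ hτ

theorem sub_le_integral_apply_of_forall_le {G : ℝ → ℝ} (hab : a ≤ b)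
    (hu : IntervalIntegrable u volume a b) (hx : ContinuousOn x (Set.Icc a b))
    (hG : ∀ s r, a ≤ s → s ≤ r → r ≤ b → G r - G s ≤ ∫ τ in s..r, u τ (x r)) :
    G b - G a ≤ ∫ τ in a..b, u τ (x τ) := by
  have hux : IntervalIntegrable (fun τ => u τ (x τ)) volume a b :=
    hu.apply_of_continuousOn (by rwa [Set.uIcc_of_le hab])
  have hsub : ∀ c ∈ Set.Icc a b, ∀ d ∈ Set.Icc a b, Set.uIcc c d ⊆ Set.uIcc a b :=
    fun c hc d hd => Set.uIcc_subset_uIcc (Set.mem_uIcc_of_le hc.1 hc.2)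
      (Set.mem_uIcc_of_le hd.1 hd.2)
  set N := ∫ τ in a..b, ‖u τ‖
  have hN : 0 ≤ N := integral_nonneg hab fun τ _ => norm_nonneg _
  refine le_of_forall_pos_le_add fun ε hε => ?_
  set ε' := ε / (N + 1)
  have hε' : 0 < ε' := by positivity
  obtain ⟨δ, hδ, hclose⟩ := Metric.uniformContinuousOn_iff_le.1
    (isCompact_Icc.uniformContinuousOn_of_continuous hx) ε' hε'
  set H : ℝ → ℝ := fun s => (∫ τ in a..s, u τ (x τ)) + ε' * ∫ τ in a..s, ‖u τ‖
  have hGH : G b - G a ≤ H b - H a := by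
    refine sub_le_sub_of_forall_short_steps hab hδ fun s r has hsr hrb hrs => ?_
    have hs : s ∈ Set.Icc a b := ⟨has, hsr.trans hrb⟩
    have hr : r ∈ Set.Icc a b := ⟨has.trans hsr, hrb⟩
    have hHrs : H r - H s = (∫ τ in s..r, u τ (x τ)) + ε' * ∫ τ in s..r, ‖u τ‖ := by
      have ha : a ∈ Set.Icc a b := ⟨le_rfl, hab⟩
      rw [← integral_interval_sub_left (hux.mono_set (hsub a ha r hr))
          (hux.mono_set (hsub a ha s hs)),
        ← integral_interval_sub_left (hu.norm.mono_set (hsub a ha r hr))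
          (hu.norm.mono_set (hsub a ha s hs))]
      ring
    rw [hHrs]
    refine (hG s r has hsr hrb).trans (integral_apply_le_add_of_forall_norm_sub_le hsr
      (hu.mono_set (hsub s hs r hr)) (hx.mono (Set.Icc_subset_Icc has hrb)) fun τ hτ => ?_)
    rw [← dist_eq_norm]
    refine hclose r hr τ ⟨has.trans hτ.1, hτ.2.trans hrb⟩ ?_
    rw [Real.dist_eq, abs_of_nonneg (by linarith [hτ.2])]
    linarith [hτ.1]
  have hεN : ε' * N ≤ ε := by
    rw [div_mul_eq_mul_div, div_le_iff₀ (by positivity)]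
    nlinarith
  simp only [H, integral_same, mul_zero, add_zero, sub_zero] at hGH
  linarith

end Pairing

theorem EReal.eq_coe_sub_of_coe_sub_eq_coe {a b : ℝ} {e : EReal} (he : (a : EReal) - e = b) :
    e = ((a - b : ℝ) : EReal) := by
  induction e using EReal.rec with
  | bot => simp at he
  | coe e => rw [← EReal.coe_sub, EReal.coe_eq_coe_iff] at he; rw [← he, sub_sub_cancel]
  | top => simp at he

section Conjugate

variable {X : Type*} [NormedAddCommGroup X] [NormedSpace ℝ X] {h : X → EReal} {hbar : ℝ}
  {hstar : StrongDual ℝ X → ℝ} {g : StrongDual ℝ X → X}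

theorem sub_le_conjugate_of_eq_coe
    (hstar_eq : ∀ ξ : StrongDual ℝ X, (hstar ξ : EReal) = ⨆ y : X, ((ξ y : EReal) - h y))
    (ξ : StrongDual ℝ X) {y : X} {c : ℝ} (hc : h y = c) : ξ y - c ≤ hstar ξ := by
  have hle : (ξ y : EReal) - h y ≤ ⨆ z : X, ((ξ z : EReal) - h z) :=
    le_iSup (fun z => (ξ z : EReal) - h z) y
  rwa [← hstar_eq, hc, ← EReal.coe_sub, EReal.coe_le_coe_iff] at hle

theorem apply_maximizer_eq
    (hgmax : ∀ ξ : StrongDual ℝ X, (ξ (g ξ) : EReal) - h (g ξ) = (hstar ξ : EReal))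
    (ξ : StrongDual ℝ X) : h (g ξ) = ((ξ (g ξ) - hstar ξ : ℝ) : EReal) :=
  EReal.eq_coe_sub_of_coe_sub_eq_coe (hgmax ξ)

theorem le_apply_maximizer_sub (hbar_inf : (⨅ y : X, h y) = (hbar : EReal))
    (hgmax : ∀ ξ : StrongDual ℝ X, (ξ (g ξ) : EReal) - h (g ξ) = (hstar ξ : EReal))
    (ξ : StrongDual ℝ X) : hbar ≤ ξ (g ξ) - hstar ξ := by
  have hle : (hbar : EReal) ≤ h (g ξ) := hbar_inf ▸ iInf_le _ (g ξ)
  rwa [apply_maximizer_eq hgmax, EReal.coe_le_coe_iff] at hle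

theorem conjugate_potential_sub_le
    (hstar_eq : ∀ ξ : StrongDual ℝ X, (hstar ξ : EReal) = ⨆ y : X, ((ξ y : EReal) - h y))
    (hbar_inf : (⨅ y : X, h y) = (hbar : EReal))
    (hgmax : ∀ ξ : StrongDual ℝ X, (ξ (g ξ) : EReal) - h (g ξ) = (hstar ξ : EReal))
    {ηs ηr : ℝ} (Us Ur : StrongDual ℝ X) (hηr : 0 < ηr) (hηrs : ηr ≤ ηs) :
    (hstar (ηr • Ur) + hbar) / ηr - (hstar (ηs • Us) + hbar) / ηs ≤
      (Ur - Us) (g (ηr • Ur)) := by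
  set y := g (ηr • Ur)
  set c := (ηr • Ur) y - hstar (ηr • Ur) with hc_def
  have hηs : 0 < ηs := hηr.trans_le hηrs
  have hbar_le : hbar ≤ c := le_apply_maximizer_sub hbar_inf hgmax _
  have hFY : ηs * Us y - c ≤ hstar (ηs • Us) :=
    sub_le_conjugate_of_eq_coe hstar_eq (ηs • Us) (apply_maximizer_eq hgmax (ηr • Ur))
  have hr : (hstar (ηr • Ur) + hbar) / ηr = Ur y - (c - hbar) / ηr := by
    simp only [hc_def, smul_apply, smul_eq_mul]
    field_simp
    ring
  have hs : Us y - (c - hbar) / ηs ≤ (hstar (ηs • Us) + hbar) / ηs := by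
    calc Us y - (c - hbar) / ηs = (ηs * Us y - c + hbar) / ηs := by field_simp; ring
      _ ≤ (hstar (ηs • Us) + hbar) / ηs := by gcongr
  have hη : (c - hbar) / ηs ≤ (c - hbar) / ηr :=
    div_le_div_of_nonneg_left (sub_nonneg.2 hbar_le) hηr hηrs
  rw [sub_apply]
  linarith

end Conjugate

theorem stmt18_general {X : Type*} [NormedAddCommGroup X] [NormedSpace ℝ X]
    (h : X → EReal)
    (hbar : ℝ) (hbar_inf : (⨅ y : X, h y) = (hbar : EReal))
    -- the conjugate `h*` is finite everywhere, with (unique) maximizer `g ξ ∈ dom h`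
    (hstar : StrongDual ℝ X → ℝ)
    (hstar_eq : ∀ ξ : StrongDual ℝ X,
      ((hstar ξ : ℝ) : EReal) = ⨆ y : X, (((ξ y : ℝ) : EReal) - h y))
    (g : StrongDual ℝ X → X)
    (hgmax : ∀ ξ : StrongDual ℝ X, ((ξ (g ξ) : ℝ) : EReal) - h (g ξ) = (hstar ξ : EReal))
    -- `h*` is Fréchet differentiable with derivative `Dh*(ξ) = g ξ`, norm-continuous
    (hgcont : Continuous g)
    -- the reward path: locally Bochner integrable, bounded on `𝒳 = dom h`
    (u : ℝ → StrongDual ℝ X) (hu : LocallyIntegrable u volume)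
    -- the learning-rate path: positive, nonincreasing, continuously differentiable
    (η : ℝ → ℝ) (hηpos : ∀ t : ℝ, 0 ≤ t → 0 < η t)
    (hηmono : AntitoneOn η (Set.Ici 0)) (hηC1 : ContDiffOn ℝ 1 η (Set.Ici 0))
    -- the continuous-time Dual Averaging trajectory
    (xc : ℝ → X)
    (hxc : ∀ t : ℝ, xc t = g ((η t) • ∫ τ in (0:ℝ)..t, u τ)) :
    ∀ (x : X) (c : ℝ), h x = (c : EReal) → ∀ t : ℝ, 0 ≤ t →
      (∫ τ in (0:ℝ)..t, u τ x) - (∫ τ in (0:ℝ)..t, u τ (xc τ)) ≤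
        (c - hbar) / η t := by
  intro x c hc t ht
  have hui : ∀ a b : ℝ, IntervalIntegrable u volume a b := fun a b =>
    (hu.integrableOn_isCompact isCompact_uIcc).intervalIntegrable
  set U : ℝ → StrongDual ℝ X := fun s => ∫ τ in (0:ℝ)..s, u τ
  set G : ℝ → ℝ := fun s => (hstar (η s • U s) + hbar) / η s
  have hG0 : G 0 ≤ 0 := by
    have := le_apply_maximizer_sub hbar_inf hgmax 0
    simp only [G, U, integral_same, smul_zero, zero_apply] at this ⊢
    exact div_nonpos_of_nonpos_of_nonneg (by linarith) (hηpos 0 le_rfl).le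
  have hxc_cont : ContinuousOn xc (Set.Icc 0 t) := by
    rw [funext hxc]
    exact hgcont.comp_continuousOn ((hηC1.continuousOn.mono fun s hs => hs.1).smul
      (continuous_primitive hui 0).continuousOn)
  have hGt : G t - G 0 ≤ ∫ τ in (0:ℝ)..t, u τ (xc τ) := by
    refine sub_le_integral_apply_of_forall_le ht (hui 0 t) hxc_cont fun s r hs hsr _ => ?_
    have hr : 0 ≤ r := hs.trans hsr
    have hstep := conjugate_potential_sub_le hstar_eq hbar_inf hgmax (U s) (U r) (hηpos r hr)
      (hηmono hs hr hsr)
    rwa [← hxc, integral_interval_sub_left (hui 0 r) (hui 0 s),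
      ContinuousLinearMap.intervalIntegral_apply (hui s r)] at hstep
  have hFY : (∫ τ in (0:ℝ)..t, u τ x) ≤ G t + (c - hbar) / η t := by
    have := sub_le_conjugate_of_eq_coe hstar_eq (η t • U t) hc
    rw [smul_apply, smul_eq_mul, ContinuousLinearMap.intervalIntegral_apply (hui 0 t)] at this
    rw [← add_div, le_div_iff₀ (hηpos t ht)]
    linarith
  linarith

/-- **Continuous-time Dual Averaging regret bound.**
`X` is a reflexive real Banach space (the canonical embedding into the double dual is
surjective), `h : X → ℝ ∪ {+∞}` is proper with `h̲ = inf h ∈ ℝ`, its conjugate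
`h*(ξ) = sup_x (⟨x,ξ⟩ - h(x))` is finite everywhere, Fréchet differentiable with
derivative `Dh*(ξ) = g(ξ)` (the unique maximizer, lying in `dom h`), and `g` is
norm-continuous. For a locally Bochner integrable reward path `u^c` with
`sup_{x ∈ 𝒳} |⟨u^c_t, x⟩| ≤ M` and a positive nonincreasing `C¹` learning-rate path
`η^c` on `[0,∞)`, the trajectory `x^c_t = g(η^c_t ∫_0^t u^c_τ dτ)` satisfies, for every
`x ∈ X` (with `h(x)` finite) and `t ≥ 0`:
`∫_0^t ⟨u^c_τ, x⟩ dτ - ∫_0^t ⟨u^c_τ, x^c_τ⟩ dτ ≤ (h(x) - h̲)/η^c_t`. -/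
theorem stmt18 {X : Type*} [NormedAddCommGroup X] [NormedSpace ℝ X] [CompleteSpace X]
    (hrefl : Function.Surjective (inclusionInDoubleDual ℝ X))
    (h : X → EReal) (hproper₁ : ∀ y : X, h y ≠ ⊥) (hproper₂ : ∃ y : X, h y ≠ ⊤)
    (hbar : ℝ) (hbar_inf : (⨅ y : X, h y) = (hbar : EReal))
    -- the conjugate `h*` is finite everywhere, with (unique) maximizer `g ξ ∈ dom h`
    (hstar : StrongDual ℝ X → ℝ)
    (hstar_eq : ∀ ξ : StrongDual ℝ X,
      ((hstar ξ : ℝ) : EReal) = ⨆ y : X, (((ξ y : ℝ) : EReal) - h y))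
    (g : StrongDual ℝ X → X)
    (hgdom : ∀ ξ : StrongDual ℝ X, h (g ξ) ≠ ⊤)
    (hgmax : ∀ ξ : StrongDual ℝ X, ((ξ (g ξ) : ℝ) : EReal) - h (g ξ) = (hstar ξ : EReal))
    (hguniq : ∀ (ξ : StrongDual ℝ X) (y : X),
      (((ξ y : ℝ) : EReal) - h y = (hstar ξ : EReal)) → y = g ξ)
    -- `h*` is Fréchet differentiable with derivative `Dh*(ξ) = g ξ`, norm-continuous
    (hfdiff : ∀ ξ : StrongDual ℝ X,
      HasFDerivAt hstar (inclusionInDoubleDual ℝ X (g ξ)) ξ)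
    (hgcont : Continuous g)
    -- the reward path: locally Bochner integrable, bounded on `𝒳 = dom h`
    (u : ℝ → StrongDual ℝ X) (hu : LocallyIntegrable u volume)
    (M : ℝ)
    (huM : ∀ (t : ℝ) (y : X), h y ≠ ⊤ → |u t y| ≤ M)
    -- the learning-rate path: positive, nonincreasing, continuously differentiable
    (η : ℝ → ℝ) (hηpos : ∀ t : ℝ, 0 ≤ t → 0 < η t)
    (hηmono : AntitoneOn η (Set.Ici 0)) (hηC1 : ContDiffOn ℝ 1 η (Set.Ici 0))
    -- the continuous-time Dual Averaging trajectory
    (xc : ℝ → X)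
    (hxc : ∀ t : ℝ, xc t = g ((η t) • ∫ τ in (0:ℝ)..t, u τ)) :
    ∀ (x : X) (c : ℝ), h x = (c : EReal) → ∀ t : ℝ, 0 ≤ t →
      (∫ τ in (0:ℝ)..t, u τ x) - (∫ τ in (0:ℝ)..t, u τ (xc τ)) ≤
        (c - hbar) / η t :=
  stmt18_general h hbar hbar_inf hstar hstar_eq g hgmax hgcont u hu η hηpos hηmono hηC1 xc hxc
end
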